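/- For every real a there exists a constant C_a > 0 such that for all natural numbers n, |σ^{(n)}(a)| ≤ C_a · n! · (2/π)^n, where σ(x) = 1/(1+e^{-x}) is the logistic sigmoid. -/

import Mathlib

noncomputable def logisticSigmoid (x : ℝ) : ℝ := 1 / (1 + Real.exp (-x))

open Complex Metric in
private lemma csig_ne (z : ℂ) (hz : |z.im| < Real.pi) : 1 + Complex.exp (-z) ≠ 0 := by
  intro h
  have h1 : Complex.exp (-z) = -1 := by linear_combination h
  have h2 : Complex.exp (-z + Real.pi * I) = 1 := by
    rw [Complex.exp_add, h1, Complex.exp_pi_mul_I]; ring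
  obtain ⟨n, hn⟩ := Complex.exp_eq_one_iff.mp h2
  have him : -z.im + Real.pi = n * (2 * Real.pi) := by
    have := congrArg Complex.im hn
    simpa using this
  have hpi := Real.pi_pos
  have habs := abs_lt.mp hz
  rcases le_or_gt 1 n with hn1 | hn1
  · have h3 : (1 : ℝ) ≤ (n : ℝ) := by exact_mod_cast hn1
    nlinarith [habs.1, habs.2]
  · have hn0 : n ≤ 0 := by omega
    have h3 : (n : ℝ) ≤ 0 := by exact_mod_cast hn0
    nlinarith [habs.1, habs.2]

open Complex Metric NNReal ENNReal

theorem sigmoid_deriv_bound (a : ℝ) :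
    ∃ C : ℝ, 0 < C ∧ ∀ n : ℕ,
      |iteratedDeriv n logisticSigmoid a| ≤ C * n.factorial * (2 / Real.pi) ^ n := by
  have hpi := Real.pi_pos
  have hpi4 : Real.pi < 4 := by linarith [Real.pi_lt_d2]
  set g : ℂ → ℂ := fun z => (1 + Complex.exp (-z))⁻¹ with hg
  set S : Set ℂ := Complex.im ⁻¹' Set.Ioo (-Real.pi) Real.pi with hS
  have hSopen : IsOpen S := isOpen_Ioo.preimage Complex.continuous_im
  have hmem : ∀ z ∈ S, 1 + Complex.exp (-z) ≠ 0 := by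
    intro z hz
    exact csig_ne z (abs_lt.mpr ⟨hz.1, hz.2⟩)
  have hdiff : DifferentiableOn ℂ g S := by
    intro z hz
    exact (((differentiable_neg.cexp.const_add 1).differentiableAt).inv
      (hmem z hz)).differentiableWithinAt
  have hanal : AnalyticOnNhd ℂ g S := hdiff.analyticOnNhd hSopen
  -- iterated derivatives of g are analytic on S
  have hiter : ∀ n : ℕ, AnalyticOnNhd ℂ (iteratedDeriv n g) S := by
    intro n
    induction n with
    | zero => simpa [iteratedDeriv_zero] using hanal
    | succ n ih => rw [iteratedDeriv_succ]; exact ih.deriv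
  -- the real iterated derivatives are real parts of the complex ones
  have hreal : ∀ n : ℕ, ∀ x : ℝ,
      iteratedDeriv n logisticSigmoid x = (iteratedDeriv n g x).re := by
    intro n
    induction n with
    | zero =>
      intro x
      simp only [iteratedDeriv_zero, logisticSigmoid, hg]
      rw [show (-(x : ℂ)) = ((-x : ℝ) : ℂ) by push_cast; ring, ← Complex.ofReal_exp]
      rw [show ((1 : ℂ) + ((Real.exp (-x) : ℝ) : ℂ)) = ((1 + Real.exp (-x) : ℝ) : ℂ) by
        push_cast; ring]
      rw [← Complex.ofReal_inv, Complex.ofReal_re, one_div]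
    | succ n ih =>
      intro x
      have hxS : (x : ℂ) ∈ S := by
        simp [hS, hpi]
      have hdiffn : DifferentiableAt ℂ (iteratedDeriv n g) (x : ℂ) :=
        (hiter n (x : ℂ) hxS).differentiableAt
      have hderiv : HasDerivAt (iteratedDeriv n g) (iteratedDeriv (n + 1) g (x : ℂ)) (x : ℂ) := by
        rw [iteratedDeriv_succ]
        exact hdiffn.hasDerivAt
      have hr : HasDerivAt (fun t : ℝ => (iteratedDeriv n g (t : ℂ)).re)
          ((iteratedDeriv (n + 1) g (x : ℂ)).re) x := hderiv.real_of_complex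
      rw [iteratedDeriv_succ]
      have : deriv (iteratedDeriv n logisticSigmoid) x
          = deriv (fun t : ℝ => (iteratedDeriv n g (t : ℂ)).re) x := by
        congr 1
        funext t
        exact ih t
      rw [this, hr.deriv]
  -- power series for g at a with radius 2
  have hball : Metric.closedBall (a : ℂ) (2 : ℝ≥0) ⊆ S := by
    intro z hz
    simp only [Metric.mem_closedBall] at hz
    have him : |z.im| ≤ 2 := by
      have h1 : |(z - (a : ℂ)).im| ≤ ‖z - (a : ℂ)‖ := Complex.abs_im_le_norm _
      rw [Complex.sub_im, Complex.ofReal_im, sub_zero] at h1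
      calc |z.im| ≤ ‖z - (a : ℂ)‖ := h1
        _ = dist z (a : ℂ) := by rw [Complex.dist_eq]
        _ ≤ 2 := by exact_mod_cast hz
    have h2 := abs_le.mp him
    have hpi3 : 3 < Real.pi := Real.pi_gt_three
    simp only [hS, Set.mem_preimage, Set.mem_Ioo]
    constructor <;> linarith [h2.1, h2.2]
  have hps : HasFPowerSeriesOnBall g (cauchyPowerSeries g (a : ℂ) (2 : ℝ≥0)) (a : ℂ)
      (2 : ℝ≥0) := (hdiff.mono hball).hasFPowerSeriesOnBall (by norm_num)
  set p := cauchyPowerSeries g (a : ℂ) (2 : ℝ≥0) with hp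
  -- coefficient bound at radius π/2
  have hrad : ((Real.toNNReal (Real.pi / 2) : ℝ≥0) : ℝ≥0∞) < p.radius := by
    refine lt_of_lt_of_le ?_ hps.r_le
    rw [ENNReal.coe_lt_coe, ← NNReal.coe_lt_coe, Real.coe_toNNReal _ (by positivity)]
    norm_num
    linarith
  obtain ⟨C, hC, hCb⟩ := p.norm_mul_pow_le_of_lt_radius hrad
  refine ⟨C, hC, fun n => ?_⟩
  have key : ‖iteratedDeriv n g (a : ℂ)‖ ≤ n.factorial * ‖p n‖ := by
    rw [iteratedDeriv_eq_iteratedFDeriv]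
    rw [← hps.factorial_smul (1 : ℂ) n]
    rw [← Nat.cast_smul_eq_nsmul ℂ, norm_smul]
    have h1 : ‖p n fun _ => (1 : ℂ)‖ ≤ ‖p n‖ := by
      calc ‖p n fun _ => (1 : ℂ)‖ ≤ ‖p n‖ * ∏ _i : Fin n, ‖(1 : ℂ)‖ :=
            (p n).le_opNorm _
        _ = ‖p n‖ := by simp
    have h2 : ‖(n.factorial : ℂ)‖ = (n.factorial : ℝ) := by
      simp
    rw [h2]
    exact mul_le_mul_of_nonneg_left h1 (Nat.cast_nonneg _)
  have hcoef : ‖p n‖ ≤ C * (2 / Real.pi) ^ n := by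
    have h := hCb n
    rw [Real.coe_toNNReal _ (by positivity)] at h
    have hpow : (0 : ℝ) < (Real.pi / 2) ^ n := by positivity
    rw [show (2 / Real.pi) ^ n = ((Real.pi / 2) ^ n)⁻¹ by
      rw [← inv_pow]; congr 1; field_simp]
    rw [le_mul_inv_iff₀ hpow]
    linarith
  have habs : |iteratedDeriv n logisticSigmoid a| ≤ ‖iteratedDeriv n g (a : ℂ)‖ := by
    rw [hreal n a]
    exact Complex.abs_re_le_norm _
  calc |iteratedDeriv n logisticSigmoid a| ≤ ‖iteratedDeriv n g (a : ℂ)‖ := habs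
    _ ≤ n.factorial * ‖p n‖ := key
    _ ≤ n.factorial * (C * (2 / Real.pi) ^ n) := by
        apply mul_le_mul_of_nonneg_left hcoef (Nat.cast_nonneg _)
    _ = C * n.factorial * (2 / Real.pi) ^ n := by ring
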